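/- arXiv:1606.08373 — 7 statements merged into one kernel-verified Lean document; each statement's English description precedes it below -/
import Mathlib

section
/- Let Y be a non-negative random variable with E[Y] = 1, and let c > 0. Then 1/(E[Y^2] + c) ≤ E[min(1, Y/c)] ≤ min(1, 1/c). -/
open MeasureTheory ProbabilityTheory ENNReal

/-!
Pointwise `Y / (Y + c) ≤ min 1 (Y / c)`, and Cauchy–Schwarz applied to
`Y = √(Y / (Y + c)) · √(Y (Y + c))` gives `1 = E[Y]² ≤ E[Y / (Y + c)] · (E[Y²] + c)`.
Working with lower integrals in `ℝ≥0∞` makes the case `E[Y²] = ∞` automatic.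
The upper bound is `min 1 (Y / c) ≤ 1` and `min 1 (Y / c) ≤ Y / c`.
-/

namespace ENNReal

variable {α : Type*} [MeasurableSpace α] (μ : Measure α)

theorem lintegral_mul_sq_le {f g : α → ℝ≥0∞} (hf : AEMeasurable f μ) (hg : AEMeasurable g μ) :
    (∫⁻ x, f x * g x ∂μ) ^ 2 ≤ (∫⁻ x, f x ^ 2 ∂μ) * ∫⁻ x, g x ^ 2 ∂μ := by
  have h := lintegral_mul_le_Lp_mul_Lq μ Real.HolderConjugate.two_two hf hg
  simp only [Pi.mul_apply, rpow_two, one_div] at h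
  calc (∫⁻ x, f x * g x ∂μ) ^ 2
      ≤ ((∫⁻ x, f x ^ 2 ∂μ) ^ (2⁻¹ : ℝ) * (∫⁻ x, g x ^ 2 ∂μ) ^ (2⁻¹ : ℝ)) ^ 2 := by gcongr
    _ = (∫⁻ x, f x ^ 2 ∂μ) * ∫⁻ x, g x ^ 2 ∂μ := by
      rw [mul_pow, ← rpow_two, ← rpow_two, rpow_inv_rpow two_ne_zero, rpow_inv_rpow two_ne_zero]

theorem lintegral_sq_le_lintegral_div_mul_lintegral_mul {a d : α → ℝ≥0∞}
    (ha : AEMeasurable a μ) (hd : AEMeasurable d μ) (hd0 : ∀ x, d x ≠ 0) (hd_top : ∀ x, d x ≠ ∞) :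
    (∫⁻ x, a x ∂μ) ^ 2 ≤ (∫⁻ x, a x / d x ∂μ) * ∫⁻ x, a x * d x ∂μ := by
  have hsq : ∀ z : ℝ≥0∞, (z ^ (2⁻¹ : ℝ)) ^ 2 = z := fun z => by
    rw [← rpow_two, rpow_inv_rpow two_ne_zero]
  have hprod : ∀ x, (a x / d x) ^ (2⁻¹ : ℝ) * (a x * d x) ^ (2⁻¹ : ℝ) = a x := fun x => by
    have h : a x / d x * (a x * d x) = a x ^ 2 := by
      rw [div_eq_mul_inv, mul_mul_mul_comm, ENNReal.inv_mul_cancel (hd0 x) (hd_top x), sq,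
        mul_one]
    rw [← mul_rpow_of_nonneg _ _ (by norm_num), h, ← rpow_two, rpow_rpow_inv two_ne_zero]
  simpa only [Pi.div_apply, Pi.mul_apply, hprod, hsq] using
    lintegral_mul_sq_le μ ((ha.div hd).pow_const (2⁻¹ : ℝ)) ((ha.mul hd).pow_const (2⁻¹ : ℝ))

theorem inv_lintegral_sq_add_le_lintegral_div_add {a : α → ℝ≥0∞} (ha : AEMeasurable a μ)
    (ha_top : ∀ x, a x ≠ ∞) (ha1 : ∫⁻ x, a x ∂μ = 1) {c : ℝ≥0∞} (hc0 : c ≠ 0) (hc_top : c ≠ ∞) :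
    (∫⁻ x, a x ^ 2 ∂μ + c)⁻¹ ≤ ∫⁻ x, a x / (a x + c) ∂μ := by
  have hmoment : ∫⁻ x, a x * (a x + c) ∂μ = ∫⁻ x, a x ^ 2 ∂μ + c := by
    simp_rw [mul_add, ← sq, mul_comm (a _) c]
    rw [lintegral_add_left' (ha.pow_const 2), lintegral_const_mul'' c ha, ha1, mul_one]
  have hCS := lintegral_sq_le_lintegral_div_mul_lintegral_mul μ ha (ha.add_const c)
    (fun x => by simp [hc0]) (fun x => add_ne_top.2 ⟨ha_top x, hc_top⟩)
  rw [ha1, one_pow, hmoment] at hCS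
  simpa only [one_div] using div_le_of_le_mul hCS

end ENNReal

theorem div_add_le_min_one_div {y c : ℝ} (hy : 0 ≤ y) (hc : 0 < c) :
    y / (y + c) ≤ min 1 (y / c) :=
  le_min ((div_le_one (by positivity)).2 (by linarith))
    (div_le_div_of_nonneg_left hy hc (by linarith))

section MinOneDiv

variable {Ω : Type*} [MeasurableSpace Ω] {P : Measure Ω} {Y : Ω → ℝ}

theorem integrable_min_one_div [IsFiniteMeasure P] (hY : Integrable Y P) (c : ℝ) :
    Integrable (fun ω => min 1 (Y ω / c)) P :=
  (integrable_const 1).inf (hY.div_const c)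

theorem integral_min_one_div_le [IsProbabilityMeasure P] (hY : Integrable Y P) (c : ℝ) :
    ∫ ω, min 1 (Y ω / c) ∂P ≤ min 1 ((∫ ω, Y ω ∂P) / c) := by
  have hmin := integrable_min_one_div hY c
  refine le_min ?_ ?_
  · simpa using integral_mono hmin (integrable_const 1) fun ω => min_le_left _ _
  · simpa [integral_div] using integral_mono hmin (hY.div_const c) fun ω => min_le_right _ _

end MinOneDiv

theorem stmt0_general {Ω : Type*} [MeasurableSpace Ω] (P : Measure Ω) [IsProbabilityMeasure P]
    (Y : Ω → ℝ) (hY0 : ∀ ω, 0 ≤ Y ω)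
    (hYint : Integrable Y P) (hY1 : ∫ ω, Y ω ∂P = 1) (c : ℝ) (hc : 0 < c) :
    (∫⁻ ω, ENNReal.ofReal ((Y ω) ^ 2) ∂P + ENNReal.ofReal c)⁻¹
        ≤ ENNReal.ofReal (∫ ω, min 1 (Y ω / c) ∂P) ∧
      ∫ ω, min 1 (Y ω / c) ∂P ≤ min 1 (1 / c) := by
  refine ⟨?_, hY1 ▸ integral_min_one_div_le hYint c⟩
  have hlintegral_Y : ∫⁻ ω, ENNReal.ofReal (Y ω) ∂P = 1 := by
    rw [← ofReal_integral_eq_lintegral_ofReal hYint (ae_of_all _ hY0), hY1, ofReal_one]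
  have hmin0 : ∀ ω, 0 ≤ min 1 (Y ω / c) := fun ω =>
    le_min zero_le_one (div_nonneg (hY0 ω) hc.le)
  calc (∫⁻ ω, ENNReal.ofReal ((Y ω) ^ 2) ∂P + ENNReal.ofReal c)⁻¹
      = (∫⁻ ω, ENNReal.ofReal (Y ω) ^ 2 ∂P + ENNReal.ofReal c)⁻¹ := by
        simp_rw [ofReal_pow (hY0 _)]
    _ ≤ ∫⁻ ω, ENNReal.ofReal (Y ω) / (ENNReal.ofReal (Y ω) + ENNReal.ofReal c) ∂P :=
        inv_lintegral_sq_add_le_lintegral_div_add P hYint.aemeasurable.ennreal_ofReal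
          (fun _ => ofReal_ne_top) hlintegral_Y (by simpa using hc) ofReal_ne_top
    _ ≤ ∫⁻ ω, ENNReal.ofReal (min 1 (Y ω / c)) ∂P := lintegral_mono fun ω => by
        rw [← ofReal_add (hY0 ω) hc.le, ← ofReal_div_of_pos (by linarith [hY0 ω])]
        exact ofReal_le_ofReal (div_add_le_min_one_div (hY0 ω) hc)
    _ = ENNReal.ofReal (∫ ω, min 1 (Y ω / c) ∂P) :=
        (ofReal_integral_eq_lintegral_ofReal (integrable_min_one_div hYint c)
          (ae_of_all _ hmin0)).symm

/-- Let `Y` be a non-negative random variable with `E[Y] = 1`, and let `c > 0`. Then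
`1/(E[Y²] + c) ≤ E[min(1, Y/c)] ≤ min(1, 1/c)`, where the second moment `E[Y²]` may be
infinite (in which case the lower bound is `0`), so it is expressed as a lower Lebesgue
integral in `ℝ≥0∞`. -/
theorem stmt0 {Ω : Type*} [MeasurableSpace Ω] (P : Measure Ω) [IsProbabilityMeasure P]
    (Y : Ω → ℝ) (hYm : Measurable Y) (hY0 : ∀ ω, 0 ≤ Y ω)
    (hYint : Integrable Y P) (hY1 : ∫ ω, Y ω ∂P = 1) (c : ℝ) (hc : 0 < c) :
    (∫⁻ ω, ENNReal.ofReal ((Y ω) ^ 2) ∂P + ENNReal.ofReal c)⁻¹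
        ≤ ENNReal.ofReal (∫ ω, min 1 (Y ω / c) ∂P) ∧
      ∫ ω, min 1 (Y ω / c) ∂P ≤ min 1 (1 / c) :=
  stmt0_general P Y hY0 hYint hY1 c hc
end

section
/- Let ν be a probability measure on [0,∞) with ∫ y dν(y) = 1 and let c > 0. Then ∫ min(1, y/c) dν(y) ≥ (∫ y·(max(y,c)) dν(y))^{-1} ≥ (∫ y² dν(y) + c)^{-1}. -/
/-!
Since `min (1, y / c) · y · max (y, c) = y²`, Cauchy–Schwarz applied to `√(min (1, y / c))`
and `√(y · max (y, c))` gives `1 = (∫ y dν)² ≤ ∫ min (1, y / c) dν · ∫ y · max (y, c) dν`,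
which is the first inequality. The second follows from `max (y, c) ≤ y + c` and `∫ y dν = 1`.
-/

open MeasureTheory ProbabilityTheory ENNReal

theorem ENNReal.lintegral_sq_le_lintegral_mul_lintegral {α : Type*} [MeasurableSpace α]
    {μ : Measure α} {f g h : α → ℝ≥0∞} (hf : AEMeasurable f μ) (hg : AEMeasurable g μ)
    (hfg : ∀ᵐ a ∂μ, h a ^ 2 = f a * g a) :
    (∫⁻ a, h a ∂μ) ^ 2 ≤ (∫⁻ a, f a ∂μ) * ∫⁻ a, g a ∂μ := by
  have hh : h =ᵐ[μ] (fun a => f a ^ (2⁻¹ : ℝ)) * fun a => g a ^ (2⁻¹ : ℝ) := by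
    filter_upwards [hfg] with a ha
    rw [Pi.mul_apply, ← mul_rpow_of_nonneg _ _ (by norm_num), ← ha]
    simpa using (pow_rpow_inv_natCast two_ne_zero (h a)).symm
  have holder := lintegral_mul_le_Lp_mul_Lq μ Real.HolderConjugate.two_two
    (hf.pow_const (2⁻¹ : ℝ)) (hg.pow_const (2⁻¹ : ℝ))
  simp only [rpow_inv_rpow two_ne_zero, one_div] at holder
  calc (∫⁻ a, h a ∂μ) ^ 2
      ≤ ((∫⁻ a, f a ∂μ) ^ (2⁻¹ : ℝ) * (∫⁻ a, g a ∂μ) ^ (2⁻¹ : ℝ)) ^ 2 := by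
        rw [lintegral_congr_ae hh]
        gcongr
    _ = (∫⁻ a, f a ∂μ) * ∫⁻ a, g a ∂μ := by
        rw [mul_pow, ← rpow_two, ← rpow_two, rpow_inv_rpow two_ne_zero,
          rpow_inv_rpow two_ne_zero]

theorem min_one_div_mul_mul_max {c : ℝ} (hc : 0 < c) (y : ℝ) :
    min 1 (y / c) * (y * max y c) = y ^ 2 := by
  rcases le_total y c with h | h
  · rw [max_eq_right h, min_eq_right ((div_le_one hc).2 h)]
    field_simp
  · rw [max_eq_left h, min_eq_left ((one_le_div hc).2 h)]
    ring

theorem ofReal_sq_eq_ofReal_min_one_div_mul_ofReal_mul_max {c : ℝ} (hc : 0 < c) (y : ℝ) :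
    ENNReal.ofReal y ^ 2 = ENNReal.ofReal (min 1 (y / c)) * ENNReal.ofReal (y * max y c) := by
  rcases le_or_gt y 0 with hy | hy
  · have hmin : min 1 (y / c) ≤ 0 :=
      (min_le_right _ _).trans (div_nonpos_of_nonpos_of_nonneg hy hc.le)
    simp [ofReal_of_nonpos hy, ofReal_of_nonpos hmin]
  · rw [← ofReal_mul (le_min zero_le_one (div_pos hy hc).le), min_one_div_mul_mul_max hc,
      ofReal_pow hy.le]

theorem lintegral_ofReal_sq_le_lintegral_min_one_div_mul_lintegral_mul_max (ν : Measure ℝ)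
    {c : ℝ} (hc : 0 < c) :
    (∫⁻ y, ENNReal.ofReal y ∂ν) ^ 2 ≤
      (∫⁻ y, ENNReal.ofReal (min 1 (y / c)) ∂ν) *
        ∫⁻ y, ENNReal.ofReal (y * max y c) ∂ν :=
  ENNReal.lintegral_sq_le_lintegral_mul_lintegral (by fun_prop) (by fun_prop)
    (ae_of_all _ (ofReal_sq_eq_ofReal_min_one_div_mul_ofReal_mul_max hc))

theorem ofReal_mul_max_le {c : ℝ} (hc : 0 ≤ c) (y : ℝ) :
    ENNReal.ofReal (y * max y c) ≤
      ENNReal.ofReal (y ^ 2) + ENNReal.ofReal c * ENNReal.ofReal y := by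
  have hle : y * max y c ≤ y ^ 2 + c * y := by
    rcases le_total y c with h | h
    · rw [max_eq_right h]; nlinarith
    · rw [max_eq_left h]; nlinarith
  calc ENNReal.ofReal (y * max y c) ≤ ENNReal.ofReal (y ^ 2 + c * y) := ofReal_le_ofReal hle
    _ ≤ ENNReal.ofReal (y ^ 2) + ENNReal.ofReal (c * y) := ofReal_add_le
    _ = ENNReal.ofReal (y ^ 2) + ENNReal.ofReal c * ENNReal.ofReal y := by
        rw [ofReal_mul hc]

theorem lintegral_ofReal_mul_max_le (ν : Measure ℝ) {c : ℝ} (hc : 0 ≤ c) :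
    ∫⁻ y, ENNReal.ofReal (y * max y c) ∂ν ≤
      ∫⁻ y, ENNReal.ofReal (y ^ 2) ∂ν + ENNReal.ofReal c * ∫⁻ y, ENNReal.ofReal y ∂ν :=
  calc ∫⁻ y, ENNReal.ofReal (y * max y c) ∂ν
      ≤ ∫⁻ y, (ENNReal.ofReal (y ^ 2) + ENNReal.ofReal c * ENNReal.ofReal y) ∂ν :=
        lintegral_mono (ofReal_mul_max_le hc)
    _ = _ := by
        rw [lintegral_add_left (by fun_prop), lintegral_const_mul _ (by fun_prop)]

theorem stmt1_general (ν : Measure ℝ) (hsupp : ∀ᵐ y ∂ν, 0 ≤ y)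
    (hint : Integrable (fun y => y) ν) (hmean : ∫ y, y ∂ν = 1) (c : ℝ) (hc : 0 < c) :
    (∫⁻ y, ENNReal.ofReal (y * max y c) ∂ν)⁻¹
        ≤ ENNReal.ofReal (∫ y, min 1 (y / c) ∂ν) ∧
      (∫⁻ y, ENNReal.ofReal (y ^ 2) ∂ν + ENNReal.ofReal c)⁻¹
        ≤ (∫⁻ y, ENNReal.ofReal (y * max y c) ∂ν)⁻¹ := by
  have hmean' : ∫⁻ y, ENNReal.ofReal y ∂ν = 1 := by
    rw [← ofReal_integral_eq_lintegral_ofReal hint hsupp, hmean, ofReal_one]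
  have hmin : ENNReal.ofReal (∫ y, min 1 (y / c) ∂ν) =
      ∫⁻ y, ENNReal.ofReal (min 1 (y / c)) ∂ν := by
    refine ofReal_integral_eq_lintegral_ofReal ?_ ?_
    · refine (hint.div_const c).mono' (by fun_prop) ?_
      filter_upwards [hsupp] with y hy
      rw [Real.norm_of_nonneg (le_min zero_le_one (div_nonneg hy hc.le))]
      exact min_le_right _ _
    · filter_upwards [hsupp] with y hy
      exact le_min zero_le_one (div_nonneg hy hc.le)
  have hCS := lintegral_ofReal_sq_le_lintegral_min_one_div_mul_lintegral_mul_max ν hc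
  rw [hmean', one_pow] at hCS
  have hAB := (one_pos.trans_le hCS).ne'
  refine ⟨?_, ENNReal.inv_le_inv' ?_⟩
  · rw [hmin, inv_le_iff_le_mul (fun _ => right_ne_zero_of_mul hAB)
      (fun _ => left_ne_zero_of_mul hAB), mul_comm]
    exact hCS
  · simpa [hmean'] using lintegral_ofReal_mul_max_le ν hc.le

/-- Let `ν` be a probability measure on `[0,∞)` (a probability measure on `ℝ` giving full
mass to the non-negative reals) with mean `1`, and let `c > 0`. Then
`∫ min(1, y/c) dν ≥ (∫ y·max(y,c) dν)⁻¹ ≥ (∫ y² dν + c)⁻¹`, where the possibly infinite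
integrals are lower Lebesgue integrals in `ℝ≥0∞`. -/
theorem stmt1 (ν : Measure ℝ) [IsProbabilityMeasure ν] (hsupp : ∀ᵐ y ∂ν, 0 ≤ y)
    (hint : Integrable (fun y => y) ν) (hmean : ∫ y, y ∂ν = 1) (c : ℝ) (hc : 0 < c) :
    (∫⁻ y, ENNReal.ofReal (y * max y c) ∂ν)⁻¹
        ≤ ENNReal.ofReal (∫ y, min 1 (y / c) ∂ν) ∧
      (∫⁻ y, ENNReal.ofReal (y ^ 2) ∂ν + ENNReal.ofReal c)⁻¹
        ≤ (∫⁻ y, ENNReal.ofReal (y * max y c) ∂ν)⁻¹ :=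
  stmt1_general ν hsupp hint hmean c hc
end

section
/- The jump kernel of the independent Metropolis–Hastings chain satisfies the one-step minorization condition P̃(x, A) ≥ π(ρ)·π̃(A) for all x ∈ E and measurable A, where π̃(dy) = π(dy)ρ(y)/π(ρ). -/
open MeasureTheory ProbabilityTheory ENNReal

/-! The density of `P̃(x, ·)` with respect to `π̃` is
`π(ρ) / ((w x ⊔ w y) ρ(x) ρ(y))`, and `(w x ⊔ w y) ρ(x) ρ(y) ≤ 1` because `ρ ≤ 1` and
`w(z) ρ(z) = ∫ min (w z) (w y) μ(dy) ≤ ∫ w dμ = 1`. Pointwise this reads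
`w(y) ρ(y) ≤ α(x, y) / ρ(x)`, which integrates over `A` against `μ` to the minorization. -/

lemma mul_le_min_one_div_div {a b r s : ℝ} (ha : 0 < a) (hb : 0 ≤ b) (hr : 0 < r) (hs : 0 ≤ s)
    (hr1 : r ≤ 1) (hs1 : s ≤ 1) (hra : r * a ≤ 1) (hsb : s * b ≤ 1) :
    b * s ≤ min 1 (b / a) / r := by
  rw [le_div_iff₀ hr]
  rcases le_total b a with hba | hab
  · rw [min_eq_right ((div_le_one ha).2 hba), le_div_iff₀ ha]
    nlinarith [mul_le_mul hra hs1 hs zero_le_one]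
  · rw [min_eq_left ((one_le_div ha).2 hab)]
    nlinarith [mul_le_mul hsb hr1 hr.le zero_le_one]

lemma mul_min_one_div {a : ℝ} (ha : 0 < a) (b : ℝ) : a * min 1 (b / a) = min a b := by
  rw [mul_min_of_nonneg _ _ ha.le, mul_one, mul_div_cancel₀ _ ha.ne']

namespace IndependentMetropolisHastings

variable {E : Type*} {w : E → ℝ}

noncomputable def acceptance (w : E → ℝ) (x y : E) : ℝ := min 1 (w y / w x)

lemma acceptance_pos (hw : ∀ x, 0 < w x) (x y : E) : 0 < acceptance w x y :=
  lt_min one_pos (div_pos (hw y) (hw x))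

lemma acceptance_le_one (x y : E) : acceptance w x y ≤ 1 := min_le_left _ _

variable [MeasurableSpace E] {μ : Measure E}

noncomputable def acceptanceRate (μ : Measure E) (w : E → ℝ) (x : E) : ℝ :=
  ∫ y, acceptance w x y ∂μ

lemma measurable_acceptance_uncurry (hwm : Measurable w) :
    Measurable (Function.uncurry (acceptance w)) :=
  measurable_const.min ((hwm.comp measurable_snd).div (hwm.comp measurable_fst))

lemma measurable_acceptanceRate [SFinite μ] (hwm : Measurable w) :
    Measurable (acceptanceRate μ w) :=
  (measurable_acceptance_uncurry hwm).stronglyMeasurable.integral_prod_right'.measurable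

lemma integrable_acceptance [IsFiniteMeasure μ] (hwm : Measurable w) (hw : ∀ x, 0 < w x)
    (x : E) : Integrable (acceptance w x) μ := by
  refine (integrable_const (1 : ℝ)).mono'
    (measurable_const.min (hwm.div_const _)).aestronglyMeasurable (ae_of_all _ fun y => ?_)
  rw [Real.norm_of_nonneg (acceptance_pos hw x y).le]
  exact acceptance_le_one x y

lemma acceptanceRate_pos [IsFiniteMeasure μ] [NeZero μ] (hwm : Measurable w)
    (hw : ∀ x, 0 < w x) (x : E) : 0 < acceptanceRate μ w x := by
  rw [acceptanceRate, integral_pos_iff_support_of_nonneg (fun y => (acceptance_pos hw x y).le)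
    (integrable_acceptance hwm hw x), Function.support_eq_univ fun y =>
    (acceptance_pos hw x y).ne']
  exact Measure.measure_univ_pos.2 (NeZero.ne μ)

lemma acceptanceRate_le_one [IsProbabilityMeasure μ] (hwm : Measurable w)
    (hw : ∀ x, 0 < w x) (x : E) : acceptanceRate μ w x ≤ 1 := by
  calc acceptanceRate μ w x ≤ ∫ _, (1 : ℝ) ∂μ :=
        integral_mono (integrable_acceptance hwm hw x) (integrable_const 1) (acceptance_le_one x)
    _ = 1 := by simp

lemma acceptanceRate_mul_le_one [IsFiniteMeasure μ] (hwm : Measurable w) (hw : ∀ x, 0 < w x)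
    (hw1 : ∫⁻ y, ENNReal.ofReal (w y) ∂μ = 1) (x : E) : acceptanceRate μ w x * w x ≤ 1 := by
  have hwi : Integrable w μ := by
    refine ⟨hwm.aestronglyMeasurable, ?_⟩
    rw [hasFiniteIntegral_iff_ofReal (ae_of_all _ fun y => (hw y).le), hw1]
    exact one_lt_top
  have hmin : acceptanceRate μ w x * w x = ∫ y, min (w x) (w y) ∂μ := by
    simp only [acceptanceRate, acceptance, mul_comm _ (w x), ← integral_const_mul,
      mul_min_one_div (hw x)]
  have hwint : ∫ y, w y ∂μ = 1 := by
    rw [integral_eq_lintegral_of_nonneg_ae (ae_of_all _ fun y => (hw y).le)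
      hwm.aestronglyMeasurable, hw1, toReal_one]
  rw [hmin, ← hwint]
  refine integral_mono ?_ hwi fun y => min_le_right _ _
  simpa only [acceptance, mul_min_one_div (hw x)] using
    (integrable_acceptance hwm hw x).const_mul (w x)

lemma mul_acceptanceRate_le_acceptance_div [IsProbabilityMeasure μ] (hwm : Measurable w)
    (hw : ∀ x, 0 < w x) (hw1 : ∫⁻ y, ENNReal.ofReal (w y) ∂μ = 1) (x y : E) :
    w y * acceptanceRate μ w y ≤ acceptance w x y / acceptanceRate μ w x :=
  mul_le_min_one_div_div (hw x) (hw y).le (acceptanceRate_pos hwm hw x)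
    (acceptanceRate_pos hwm hw y).le (acceptanceRate_le_one hwm hw x)
    (acceptanceRate_le_one hwm hw y) (acceptanceRate_mul_le_one hwm hw hw1 x)
    (acceptanceRate_mul_le_one hwm hw hw1 y)

end IndependentMetropolisHastings

open IndependentMetropolisHastings in
/-- The jump kernel of the independent Metropolis–Hastings chain,
`P̃(x, A) = ∫_A μ(dy) α(x,y)/ρ(x)` with `α(x,y) = min(1, w(y)/w(x))` and
`ρ(x) = ∫ α(x,y) μ(dy)`, satisfies the one-step minorization condition
`P̃(x, A) ≥ π(ρ)·π̃(A)` for all `x` and all measurable `A`, where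
`π̃(A) = (∫_A ρ dπ)/π(ρ)`. All quantities are expressed in `ℝ≥0∞`. -/
theorem stmt4 {E : Type*} [MeasurableSpace E] (μ π : Measure E)
    [IsProbabilityMeasure μ] [IsProbabilityMeasure π]
    (w : E → ℝ) (hwm : Measurable w) (hw : ∀ x, 0 < w x)
    (hdens : π = μ.withDensity (fun x => ENNReal.ofReal (w x)))
    (ρ : E → ℝ) (hρ : ∀ x, ρ x = ∫ y, min 1 (w y / w x) ∂μ) :
    ∀ x : E, ∀ A : Set E, MeasurableSet A →
      (∫⁻ y, ENNReal.ofReal (ρ y) ∂π) *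
          ((∫⁻ y in A, ENNReal.ofReal (ρ y) ∂π) / ∫⁻ y, ENNReal.ofReal (ρ y) ∂π)
        ≤ ∫⁻ y in A, ENNReal.ofReal (min 1 (w y / w x) / ρ x) ∂μ := by
  intro x A hA
  obtain rfl : ρ = acceptanceRate μ w := funext hρ
  have hw1 : ∫⁻ y, ENNReal.ofReal (w y) ∂μ = 1 := by
    simpa [hdens] using measure_univ (μ := π)
  calc _ ≤ ∫⁻ y in A, ENNReal.ofReal (acceptanceRate μ w y) ∂π := ENNReal.mul_div_le
    _ = ∫⁻ y in A, ENNReal.ofReal (w y * acceptanceRate μ w y) ∂μ := by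
        rw [hdens, setLIntegral_withDensity_eq_setLIntegral_mul μ hwm.ennreal_ofReal
          (measurable_acceptanceRate hwm).ennreal_ofReal hA]
        simp only [Pi.mul_apply, ENNReal.ofReal_mul (hw _).le]
    _ ≤ _ := lintegral_mono fun y => ENNReal.ofReal_le_ofReal
        (mul_acceptanceRate_le_acceptance_div hwm hw hw1 x y)
end

section
/- For the IMH sampler with π(w) = ∞: there exists C > 0 such that the set B = {x : w(x) ≥ C} satisfies π(Bᶜ) > 0, π(B) > 0 and μ(B) > 0; moreover for x ∈ B, ρ(x) ≥ π(Bᶜ)/w(x), and for x ∈ Bᶜ, ρ(x) ≥ μ(B). Consequently, if π(f²) < ∞ and π(w·f²) < ∞ then π(f²/ρ) ≤ π(1_B·w·f²)/π(Bᶜ) + π(1_{Bᶜ}·f²)/μ(B) < ∞. -/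
open MeasureTheory ProbabilityTheory ENNReal

/-! Choose `C > 0` with `π {w < C} > 0`, and let `B = {w ≥ C}`. Since `π(w) = ∞` while `w` is
bounded on `Bᶜ`, also `π B > 0`, hence `μ B > 0`. With `A_x = {w ≥ w x}` one has
`ρ x = μ A_x + π A_xᶜ / w x`; for `x ∈ B` the set `A_xᶜ` contains `Bᶜ`, and for `x ∉ B` the
set `A_x` contains `B`. These two lower bounds on `ρ` bound `f² / ρ` by `w f² / π Bᶜ` on `B`
and by `f² / μ B` on `Bᶜ`. -/

section

variable {E : Type*} [MeasurableSpace E]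

lemma exists_pos_measure_setOf_lt_ne_zero (π : Measure E) [NeZero π] (w : E → ℝ) :
    ∃ C : ℝ, 0 < C ∧ π {x | w x < C} ≠ 0 := by
  by_contra! h
  have hcover : (⋃ n : ℕ, {x | w x < n + 1}) = Set.univ :=
    Set.eq_univ_of_forall fun x => Set.mem_iUnion.2 ((exists_nat_gt (w x)).imp
      fun n hn => (hn.trans (lt_add_one _) : w x < n + 1))
  have := measure_iUnion_null fun n : ℕ => h (n + 1) (by positivity)
  rw [hcover, Measure.measure_univ_eq_zero] at this
  exact NeZero.ne π this

lemma measure_setOf_le_ne_zero_of_lintegral_eq_top {π : Measure E} [IsFiniteMeasure π]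
    {w : E → ℝ} (hπw : ∫⁻ x, ENNReal.ofReal (w x) ∂π = ⊤) (C : ℝ) :
    π {x | C ≤ w x} ≠ 0 := by
  intro h
  have hlt : ∀ᵐ x ∂π, w x < C := by
    rw [ae_iff]
    simpa only [not_lt] using h
  have : ∫⁻ x, ENNReal.ofReal (w x) ∂π ≤ ENNReal.ofReal C * π Set.univ := by
    rw [← lintegral_const]
    exact lintegral_mono_ae (hlt.mono fun x hx => ENNReal.ofReal_le_ofReal hx.le)
  exact (hπw ▸ this).not_gt (mul_lt_top ofReal_lt_top (measure_lt_top π _))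

noncomputable def acceptanceRate (μ : Measure E) (w : E → ℝ) (x : E) : ℝ :=
  ∫ y, min 1 (w y / w x) ∂μ

section acceptanceRate

variable {μ : Measure E} {w : E → ℝ}

lemma acceptanceRate_nonneg (hw : ∀ x, 0 < w x) (x : E) : 0 ≤ acceptanceRate μ w x :=
  integral_nonneg fun y => le_min zero_le_one (div_nonneg (hw y).le (hw x).le)

lemma ofReal_acceptanceRate [IsFiniteMeasure μ] (hwm : Measurable w) (hw : ∀ x, 0 < w x)
    (x : E) :
    ENNReal.ofReal (acceptanceRate μ w x) = ∫⁻ y, ENNReal.ofReal (min 1 (w y / w x)) ∂μ := by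
  have hnonneg : ∀ y, 0 ≤ min 1 (w y / w x) :=
    fun y => le_min zero_le_one (div_nonneg (hw y).le (hw x).le)
  refine ofReal_integral_eq_lintegral_ofReal ?_ (ae_of_all _ hnonneg)
  refine Integrable.of_bound (measurable_const.min (hwm.div_const _)).aestronglyMeasurable 1
    (ae_of_all _ fun y => ?_)
  rw [Real.norm_of_nonneg (hnonneg y)]
  exact min_le_left _ _

lemma ofReal_acceptanceRate_eq [IsFiniteMeasure μ] (hwm : Measurable w) (hw : ∀ x, 0 < w x)
    (x : E) :
    ENNReal.ofReal (acceptanceRate μ w x) = μ {y | w x ≤ w y}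
      + μ.withDensity (fun y => ENNReal.ofReal (w y)) {y | w x ≤ w y}ᶜ / ENNReal.ofReal (w x) := by
  have hA : MeasurableSet {y | w x ≤ w y} := measurableSet_le measurable_const hwm
  rw [ofReal_acceptanceRate hwm hw, ← lintegral_add_compl _ hA, withDensity_apply _ hA.compl,
    div_eq_mul_inv, ← lintegral_mul_const' _ _ (inv_ne_top.2 (ofReal_pos.2 (hw x)).ne'),
    ← setLIntegral_one]
  congr 1
  · refine setLIntegral_congr_fun hA fun y hy => ?_
    rw [min_eq_left ((one_le_div (hw x)).2 hy), ofReal_one]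
  · refine setLIntegral_congr_fun hA.compl fun y hy => ?_
    rw [min_eq_right ((div_le_one (hw x)).2 (not_le.1 (show ¬w x ≤ w y from hy)).le), ofReal_div_of_pos (hw x),
      div_eq_mul_inv]

lemma toReal_measure_le_acceptanceRate [IsFiniteMeasure μ] (hwm : Measurable w)
    (hw : ∀ x, 0 < w x) {x : E} {s : Set E} (hs : s ⊆ {y | w x ≤ w y}) :
    (μ s).toReal ≤ acceptanceRate μ w x := by
  refine toReal_le_of_le_ofReal (acceptanceRate_nonneg hw x) ?_
  rw [ofReal_acceptanceRate_eq hwm hw]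
  exact (measure_mono hs).trans le_self_add

lemma toReal_withDensity_div_le_acceptanceRate [IsFiniteMeasure μ] (hwm : Measurable w)
    (hw : ∀ x, 0 < w x) {x : E} {s : Set E} (hs : s ⊆ {y | w x ≤ w y}ᶜ) :
    (μ.withDensity (fun y => ENNReal.ofReal (w y)) s).toReal / w x ≤ acceptanceRate μ w x := by
  rw [← toReal_ofReal (hw x).le, ← toReal_div]
  refine toReal_le_of_le_ofReal (acceptanceRate_nonneg hw x) ?_
  rw [ofReal_acceptanceRate_eq hwm hw]
  exact (ENNReal.div_le_div_right (measure_mono hs) _).trans le_add_self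

end acceptanceRate

lemma setLIntegral_ofReal_sq_div_le {ν : Measure E} {s : Set E} (hs : MeasurableSet s)
    {ρ v f : E → ℝ} {c : ℝ} (hc : 0 < c) (hv : ∀ x ∈ s, 0 < v x)
    (hρ : ∀ x ∈ s, c / v x ≤ ρ x) :
    ∫⁻ x in s, ENNReal.ofReal (f x ^ 2 / ρ x) ∂ν
      ≤ (∫⁻ x in s, ENNReal.ofReal (v x * f x ^ 2) ∂ν) / ENNReal.ofReal c := by
  rw [div_eq_mul_inv, ← lintegral_mul_const' _ _ (inv_ne_top.2 (ofReal_pos.2 hc).ne')]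
  refine setLIntegral_mono' hs fun x hx => ?_
  rw [← div_eq_mul_inv, ← ofReal_div_of_pos hc]
  refine ofReal_le_ofReal ?_
  have hcρ : c ≤ v x * ρ x := by rw [← div_le_iff₀' (hv x hx)]; exact hρ x hx
  have hρpos : 0 < ρ x := (div_pos hc (hv x hx)).trans_le (hρ x hx)
  rw [div_le_div_iff₀ hρpos hc]
  nlinarith [sq_nonneg (f x)]

end

theorem stmt6_general {E : Type*} [MeasurableSpace E] (μ π : Measure E)
    [IsProbabilityMeasure μ] [IsProbabilityMeasure π]
    (w : E → ℝ) (hwm : Measurable w) (hw : ∀ x, 0 < w x)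
    (hdens : π = μ.withDensity (fun x => ENNReal.ofReal (w x)))
    (ρ : E → ℝ) (hρ : ∀ x, ρ x = ∫ y, min 1 (w y / w x) ∂μ)
    (hπw : ∫⁻ x, ENNReal.ofReal (w x) ∂π = ⊤)
    (f : E → ℝ) :
    ∃ C : ℝ, 0 < C ∧
      (π {x | C ≤ w x}ᶜ ≠ 0 ∧ π {x | C ≤ w x} ≠ 0 ∧ μ {x | C ≤ w x} ≠ 0) ∧
      (∀ x ∈ {x | C ≤ w x}, (π {x | C ≤ w x}ᶜ).toReal / w x ≤ ρ x) ∧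
      (∀ x ∈ {x | C ≤ w x}ᶜ, (μ {x | C ≤ w x}).toReal ≤ ρ x) ∧
      ((∫⁻ x, ENNReal.ofReal (f x ^ 2) ∂π < ⊤ → ∫⁻ x, ENNReal.ofReal (w x * f x ^ 2) ∂π < ⊤ →
        (∫⁻ x, ENNReal.ofReal (f x ^ 2 / ρ x) ∂π
            ≤ (∫⁻ x in {x | C ≤ w x}, ENNReal.ofReal (w x * f x ^ 2) ∂π) / π {x | C ≤ w x}ᶜ
              + (∫⁻ x in {x | C ≤ w x}ᶜ, ENNReal.ofReal (f x ^ 2) ∂π) / μ {x | C ≤ w x} ∧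
          ∫⁻ x, ENNReal.ofReal (f x ^ 2 / ρ x) ∂π < ⊤)) ) := by
  obtain rfl : ρ = acceptanceRate μ w := funext hρ
  obtain ⟨C, hC, hπBc⟩ := exists_pos_measure_setOf_lt_ne_zero π w
  set B := {x | C ≤ w x}
  have hB : MeasurableSet B := measurableSet_le measurable_const hwm
  have hπBc : π Bᶜ ≠ 0 := by simpa only [B, Set.compl_ofPred, not_le] using hπBc
  have hπB : π B ≠ 0 := measure_setOf_le_ne_zero_of_lintegral_eq_top hπw C
  have hμB : μ B ≠ 0 := fun h => hπB (hdens ▸ withDensity_absolutelyContinuous μ _ h)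
  have bound_B : ∀ x ∈ B, (π Bᶜ).toReal / w x ≤ acceptanceRate μ w x := fun x hx =>
    hdens ▸ toReal_withDensity_div_le_acceptanceRate hwm hw
      fun y (hy : ¬C ≤ w y) => not_le.2 ((not_le.1 hy).trans_le hx)
  have bound_Bc : ∀ x ∈ Bᶜ, (μ B).toReal ≤ acceptanceRate μ w x := fun x (hx : ¬C ≤ w x) =>
    toReal_measure_le_acceptanceRate hwm hw fun y hy => (not_le.1 hx).le.trans hy
  refine ⟨C, hC, ⟨hπBc, hπB, hμB⟩, bound_B, bound_Bc, fun hf2 hwf2 => ?_⟩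
  have hmain : ∫⁻ x, ENNReal.ofReal (f x ^ 2 / acceptanceRate μ w x) ∂π
      ≤ (∫⁻ x in B, ENNReal.ofReal (w x * f x ^ 2) ∂π) / π Bᶜ
        + (∫⁻ x in Bᶜ, ENNReal.ofReal (f x ^ 2) ∂π) / μ B := by
    rw [← lintegral_add_compl _ hB]
    gcongr
    · simpa only [ofReal_toReal (measure_ne_top π Bᶜ)] using setLIntegral_ofReal_sq_div_le hB
        (toReal_pos hπBc (measure_ne_top _ _)) (fun x _ => hw x) bound_B
    · simpa only [one_mul, div_one, ofReal_toReal (measure_ne_top μ B)] using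
        setLIntegral_ofReal_sq_div_le (v := fun _ => 1) hB.compl
          (toReal_pos hμB (measure_ne_top _ _)) (fun _ _ => one_pos) (by simpa using bound_Bc)
  refine ⟨hmain, hmain.trans_lt (add_lt_top.2 ⟨?_, ?_⟩)⟩
  · exact div_lt_top ((setLIntegral_le_lintegral _ _).trans_lt hwf2).ne hπBc
  · exact div_lt_top ((setLIntegral_le_lintegral _ _).trans_lt hf2).ne hμB

/-- For the IMH sampler with `π(w) = ∞`: there exists `C > 0` such that
`B = {x : w(x) ≥ C}` satisfies `π(Bᶜ) > 0`, `π(B) > 0` and `μ(B) > 0`; moreover for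
`x ∈ B`, `ρ(x) ≥ π(Bᶜ)/w(x)`, and for `x ∈ Bᶜ`, `ρ(x) ≥ μ(B)`. Consequently, if
`π(f²) < ∞` and `π(w·f²) < ∞` then
`π(f²/ρ) ≤ π(1_B·w·f²)/π(Bᶜ) + π(1_{Bᶜ}·f²)/μ(B) < ∞`. -/
theorem stmt6 {E : Type*} [MeasurableSpace E] (μ π : Measure E)
    [IsProbabilityMeasure μ] [IsProbabilityMeasure π]
    (w : E → ℝ) (hwm : Measurable w) (hw : ∀ x, 0 < w x)
    (hdens : π = μ.withDensity (fun x => ENNReal.ofReal (w x)))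
    (ρ : E → ℝ) (hρ : ∀ x, ρ x = ∫ y, min 1 (w y / w x) ∂μ)
    (hπw : ∫⁻ x, ENNReal.ofReal (w x) ∂π = ⊤)
    (f : E → ℝ) (hfm : Measurable f) (hf0 : ∫ x, f x ∂π = 0) :
    ∃ C : ℝ, 0 < C ∧
      (π {x | C ≤ w x}ᶜ ≠ 0 ∧ π {x | C ≤ w x} ≠ 0 ∧ μ {x | C ≤ w x} ≠ 0) ∧
      (∀ x ∈ {x | C ≤ w x}, (π {x | C ≤ w x}ᶜ).toReal / w x ≤ ρ x) ∧
      (∀ x ∈ {x | C ≤ w x}ᶜ, (μ {x | C ≤ w x}).toReal ≤ ρ x) ∧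
      ((∫⁻ x, ENNReal.ofReal (f x ^ 2) ∂π < ⊤ → ∫⁻ x, ENNReal.ofReal (w x * f x ^ 2) ∂π < ⊤ →
        (∫⁻ x, ENNReal.ofReal (f x ^ 2 / ρ x) ∂π
            ≤ (∫⁻ x in {x | C ≤ w x}, ENNReal.ofReal (w x * f x ^ 2) ∂π) / π {x | C ≤ w x}ᶜ
              + (∫⁻ x in {x | C ≤ w x}ᶜ, ENNReal.ofReal (f x ^ 2) ∂π) / μ {x | C ≤ w x} ∧
          ∫⁻ x, ENNReal.ofReal (f x ^ 2 / ρ x) ∂π < ⊤)) ) :=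
  stmt6_general μ π w hwm hw hdens ρ hρ hπw f
end

section
/- Let P(x,A) = ρ(x)P̃(x,A) + (1−ρ(x))1_A(x) be π-reversible with jump kernel P̃ reversible with respect to π̃(dx) = π(dx)ρ(x)/π(ρ). Then the right spectral gaps satisfy Gap(P̃) ≥ Gap(P). -/
/-!
Holding at `x` contributes nothing to `(g y - g x)²`, so `𝓔_P(g) = π(ρ) 𝓔_{P̃}(g)` exactly.
Since a variance is the least mean square deviation from a constant and `π(ρ) π̃ = ρ π ≤ π`,
`π(ρ) var_{π̃}(g) ≤ π(ρ) ∫ (g - π g)² dπ̃ ≤ ∫ (g - π g)² dπ = var_π(g)`. Dividing gives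
`Gap(P) ≤ Gap(P̃)`, provided `L²(π̃) ⊆ L²(π)`; when `Gap(P) > 0` this holds because then
`ρ ≥ ε > 0`, i.e. `ε π ≤ ρ π`.
-/

open MeasureTheory ProbabilityTheory ENNReal

/-- The Dirichlet form `𝓔_K(g) = (1/2)∫ ν(dx) K(x,dy) (g(y) − g(x))²`. -/
noncomputable def dirichletForm {α : Type*} [MeasurableSpace α] (ν : Measure α)
    (K : α → Measure α) (g : α → ℝ) : ℝ≥0∞ :=
  (1 / 2) * ∫⁻ x, ∫⁻ y, ENNReal.ofReal ((g y - g x) ^ 2) ∂(K x) ∂ν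

/-- Reversibility of a kernel `K` with respect to `ν`. -/
def IsReversible {α : Type*} [MeasurableSpace α] (ν : Measure α) (K : α → Measure α) : Prop :=
  ∀ A B : Set α, MeasurableSet A → MeasurableSet B →
    ∫⁻ x in A, K x B ∂ν = ∫⁻ x in B, K x A ∂ν

/-- The right spectral gap of a `ν`-reversible kernel `K`:
`Gap(K) = inf { 𝓔_K(g)/var_ν(g) : g ∈ L²(ν), var_ν(g) > 0 }`. -/
noncomputable def spectralGap {α : Type*} [MeasurableSpace α] (ν : Measure α)
    (K : α → Measure α) : ℝ≥0∞ :=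
  ⨅ g : {g : α → ℝ // MemLp g 2 ν ∧ evariance g ν ≠ 0},
    dirichletForm ν K g.1 / evariance g.1 ν

section

variable {α : Type*} [MeasurableSpace α]

lemma lintegral_dirac_le (x : α) (f : α → ℝ≥0∞) : ∫⁻ y, f y ∂Measure.dirac x ≤ f x := by
  rw [lintegral_def]
  refine iSup₂_le fun φ hφ => ?_
  rw [← SimpleFunc.lintegral_eq_lintegral, lintegral_dirac' x φ.measurable]
  exact hφ x

lemma dirichletForm_smul_measure (c : ℝ≥0∞) (ν : Measure α) (K : α → Measure α) (g : α → ℝ) :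
    dirichletForm (c • ν) K g = c * dirichletForm ν K g := by
  simp only [dirichletForm, lintegral_smul_measure, smul_eq_mul]
  ring

lemma dirichletForm_add_smul_dirac {ν : Measure α} {K : α → Measure α} {a : α → ℝ≥0∞}
    (ha : Measurable a) (ha_top : ∀ᵐ x ∂ν, a x < ∞) (b : α → ℝ≥0∞) (g : α → ℝ) :
    dirichletForm ν (fun x => a x • K x + b x • Measure.dirac x) g
      = dirichletForm (ν.withDensity a) K g := by
  rw [dirichletForm, dirichletForm,
    lintegral_withDensity_eq_lintegral_mul_non_measurable _ ha ha_top]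
  congr 1
  refine lintegral_congr fun x => ?_
  have hhold : ∫⁻ y, ENNReal.ofReal ((g y - g x) ^ 2) ∂Measure.dirac x = 0 :=
    le_antisymm ((lintegral_dirac_le x _).trans_eq (by simp)) zero_le
  rw [lintegral_add_measure, lintegral_smul_measure, lintegral_smul_measure, hhold]
  simp

lemma le_smul_withDensity_of_ae_le {μ : Measure α} {w : α → ℝ≥0∞} {ε : ℝ≥0∞} (hε0 : ε ≠ 0)
    (hε : ε ≠ ∞) (h : ∀ᵐ x ∂μ, ε ≤ w x) : μ ≤ ε⁻¹ • μ.withDensity w := by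
  refine Measure.le_iff.2 fun A hA => ?_
  rw [Measure.smul_apply, withDensity_apply _ hA, smul_eq_mul]
  calc μ A = ε⁻¹ * ∫⁻ _ in A, ε ∂μ := by
        rw [setLIntegral_const, ← mul_assoc, ENNReal.inv_mul_cancel hε0 hε, one_mul]
    _ ≤ ε⁻¹ * ∫⁻ x in A, w x ∂μ := by
        gcongr ε⁻¹ * ?_; exact lintegral_mono_ae (ae_restrict_of_ae h)

lemma evariance_le_lintegral_sub_sq {ν : Measure α} [IsProbabilityMeasure ν] {g : α → ℝ}
    (hg : MemLp g 2 ν) (a : ℝ) : evariance g ν ≤ ∫⁻ x, ENNReal.ofReal ((g x - a) ^ 2) ∂ν := by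
  have hga : MemLp (fun x => g x - a) 2 ν := hg.sub (memLp_const a)
  rw [← hg.ofReal_variance_eq, ← variance_sub_const hg.aestronglyMeasurable,
    ← ofReal_integral_eq_lintegral_ofReal hga.integrable_sq (ae_of_all _ fun x => sq_nonneg _)]
  exact ENNReal.ofReal_le_ofReal (variance_le_expectation_sq hga.aestronglyMeasurable)

lemma mul_evariance_le_of_smul_le {μ ν : Measure α} [IsProbabilityMeasure ν] {c : ℝ≥0∞}
    (h : c • ν ≤ μ) {g : α → ℝ} (hg : MemLp g 2 ν) : c * evariance g ν ≤ evariance g μ :=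
  calc c * evariance g ν ≤ c * ∫⁻ x, ENNReal.ofReal ((g x - μ[g]) ^ 2) ∂ν := by
        gcongr; exact evariance_le_lintegral_sub_sq hg _
    _ = ∫⁻ x, ENNReal.ofReal ((g x - μ[g]) ^ 2) ∂(c • ν) := by
        rw [lintegral_smul_measure, smul_eq_mul]
    _ ≤ ∫⁻ x, ENNReal.ofReal ((g x - μ[g]) ^ 2) ∂μ := lintegral_mono' h le_rfl
    _ = evariance g μ := (evariance_eq_lintegral_ofReal g μ).symm

lemma spectralGap_le_spectralGap_of_comparison {ν₁ ν₂ : Measure α} {K₁ K₂ : α → Measure α}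
    {c : ℝ≥0∞} (hc0 : c ≠ 0) (hc : c ≠ ∞)
    (hL2 : ∀ g : α → ℝ, MemLp g 2 ν₂ → MemLp g 2 ν₁)
    (hdir : ∀ g : α → ℝ, dirichletForm ν₁ K₁ g ≤ c * dirichletForm ν₂ K₂ g)
    (hvar : ∀ g : α → ℝ, MemLp g 2 ν₂ → c * evariance g ν₂ ≤ evariance g ν₁) :
    spectralGap ν₁ K₁ ≤ spectralGap ν₂ K₂ := by
  refine le_iInf fun ⟨g, hg, hv⟩ => ?_
  have hv₁ : evariance g ν₁ ≠ 0 :=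
    ((pos_iff_ne_zero.2 (mul_ne_zero hc0 hv)).trans_le (hvar g hg)).ne'
  calc spectralGap ν₁ K₁ ≤ dirichletForm ν₁ K₁ g / evariance g ν₁ :=
        iInf_le (fun g : {g // MemLp g 2 ν₁ ∧ evariance g ν₁ ≠ 0} => _) ⟨g, hL2 g hg, hv₁⟩
    _ ≤ c * dirichletForm ν₂ K₂ g / (c * evariance g ν₂) :=
        ENNReal.div_le_div (hdir g) (hvar g hg)
    _ = dirichletForm ν₂ K₂ g / evariance g ν₂ := ENNReal.mul_div_mul_left _ _ hc0 hc

end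

theorem stmt10_general {E : Type*} [MeasurableSpace E] (π : Measure E) [IsProbabilityMeasure π]
    (ρ : E → ℝ) (hρm : Measurable ρ) (hρ : ∀ x, 0 < ρ x ∧ ρ x ≤ 1)
    (Pt : E → Measure E)
    (hLee : 0 < spectralGap π
        (fun x => ENNReal.ofReal (ρ x) • Pt x + ENNReal.ofReal (1 - ρ x) • Measure.dirac x) →
      ∃ ε : ℝ, 0 < ε ∧ ∀ᵐ x ∂π, ε ≤ ρ x) :
    spectralGap
        ((∫⁻ x, ENNReal.ofReal (ρ x) ∂π)⁻¹ • π.withDensity (fun x => ENNReal.ofReal (ρ x))) Pt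
      ≥ spectralGap π
        (fun x => ENNReal.ofReal (ρ x) • Pt x + ENNReal.ofReal (1 - ρ x) • Measure.dirac x) := by
  set w : E → ℝ≥0∞ := fun x => ENNReal.ofReal (ρ x)
  set c := ∫⁻ x, w x ∂π
  have hc0 : c ≠ 0 := by
    rw [Ne, lintegral_eq_zero_iff hρm.ennreal_ofReal]
    intro h
    obtain ⟨x, hx⟩ := h.exists
    exact (ENNReal.ofReal_pos.2 (hρ x).1).ne' hx
  have hc : c ≠ ∞ := ne_top_of_le_ne_top (by simp) (lintegral_mono (g := 1) fun x =>
    ENNReal.ofReal_le_one.2 (hρ x).2)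
  set πt := c⁻¹ • π.withDensity w
  have hwc : π.withDensity w = c • πt := by
    rw [smul_smul, ENNReal.mul_inv_cancel hc0 hc, one_smul]
  have : IsProbabilityMeasure πt :=
    ⟨by rw [Measure.smul_apply, withDensity_apply _ .univ, Measure.restrict_univ, smul_eq_mul,
      ENNReal.inv_mul_cancel hc0 hc]⟩
  rcases eq_or_ne (spectralGap π _) 0 with hgap | hgap
  · rw [hgap]; exact zero_le
  obtain ⟨ε, hε, hρε⟩ := hLee (pos_iff_ne_zero.2 hgap)
  have hπ : π ≤ (ENNReal.ofReal ε)⁻¹ • π.withDensity w :=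
    le_smul_withDensity_of_ae_le (ENNReal.ofReal_pos.2 hε).ne' ENNReal.ofReal_ne_top
      (hρε.mono fun x hx => ENNReal.ofReal_le_ofReal hx)
  refine spectralGap_le_spectralGap_of_comparison hc0 hc (fun g hg => ?_) (fun g => ?_)
    (fun g hg => mul_evariance_le_of_smul_le ?_ hg)
  · rw [hwc, smul_smul] at hπ
    exact (hg.smul_measure (ENNReal.mul_ne_top (by simpa using hε) hc)).mono_measure hπ
  · rw [dirichletForm_add_smul_dirac hρm.ennreal_ofReal
      (ae_of_all _ fun _ => ENNReal.ofReal_lt_top), hwc, dirichletForm_smul_measure]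
  · rw [← hwc]
    calc π.withDensity w ≤ π.withDensity 1 :=
          withDensity_mono (ae_of_all _ fun x => ENNReal.ofReal_le_one.2 (hρ x).2)
      _ = π := withDensity_one

/-- Let `P(x,·) = ρ(x) P̃(x,·) + (1−ρ(x)) δ_x` be `π`-reversible, with jump kernel `P̃`
reversible with respect to `π̃ = π(ρ)⁻¹·ρ·π`. (Using that `Gap(P) > 0` implies
`π`-ess inf `ρ > 0`.) Then the right spectral gaps satisfy `Gap(P̃) ≥ Gap(P)`. -/
theorem stmt10 {E : Type*} [MeasurableSpace E] (π : Measure E) [IsProbabilityMeasure π]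
    (ρ : E → ℝ) (hρm : Measurable ρ) (hρ : ∀ x, 0 < ρ x ∧ ρ x ≤ 1)
    (Pt : E → Measure E) (hPt : ∀ x, IsProbabilityMeasure (Pt x))
    (hrevt : IsReversible
      ((∫⁻ x, ENNReal.ofReal (ρ x) ∂π)⁻¹ • π.withDensity (fun x => ENNReal.ofReal (ρ x))) Pt)
    (hrevP : IsReversible π
      (fun x => ENNReal.ofReal (ρ x) • Pt x + ENNReal.ofReal (1 - ρ x) • Measure.dirac x))
    (hLee : 0 < spectralGap π
        (fun x => ENNReal.ofReal (ρ x) • Pt x + ENNReal.ofReal (1 - ρ x) • Measure.dirac x) →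
      ∃ ε : ℝ, 0 < ε ∧ ∀ᵐ x ∂π, ε ≤ ρ x) :
    spectralGap
        ((∫⁻ x, ENNReal.ofReal (ρ x) ∂π)⁻¹ • π.withDensity (fun x => ENNReal.ofReal (ρ x))) Pt
      ≥ spectralGap π
        (fun x => ENNReal.ofReal (ρ x) • Pt x + ENNReal.ofReal (1 - ρ x) • Measure.dirac x) :=
  stmt10_general π ρ hρm hρ Pt hLee
end

section
/- Let Q be a probability measure on [0,∞) with ∫ u dQ(u) = 1 and second moment s̄ = ∫ u² dQ(u) < ∞. Define ρ_U(u) = ∫ min(1, v/u) dQ(v). Then 1/(s̄ + u) ≤ ρ_U(u) ≤ min(1, 1/u) for all u ≥ 0, and ∫ u·ρ_U(u) dQ(u) ≥ 1/(2s̄). -/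
open MeasureTheory

/-!
Both lower bounds come from the tangent-line inequality `1/x ≥ (2c - x)/c²` of the convex
function `x ↦ 1/x`. Since `min 1 (v/u) ≥ v/(u + v)`, it gives the pointwise bound
`min 1 (v/u) ≥ v (2c - u - v)/c²`, which is quadratic in `v` and so integrates to
`(2c - u - s̄)/c²` against `Q`. The choice `c = s̄ + u` yields `ρ_U(u) ≥ 1/(s̄ + u)`; multiplying by
`u` and integrating once more with `c = 2s̄` yields `∫ u ρ_U(u) dQ(u) ≥ 1/(2s̄)`.
-/

lemma two_mul_sub_div_sq_le_one_div {x : ℝ} (hx : 0 < x) (c : ℝ) :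
    (2 * c - x) / c ^ 2 ≤ 1 / x := by
  rcases eq_or_ne c 0 with rfl | hc
  · simp [hx.le]
  · rw [div_le_div_iff₀ (by positivity) hx]
    nlinarith [sq_nonneg (c - x)]

lemma mul_two_mul_sub_div_sq_le_min_one_div {u v : ℝ} (hu : 0 < u) (hv : 0 ≤ v) (c : ℝ) :
    v * (2 * c - u - v) / c ^ 2 ≤ min 1 (v / u) :=
  calc v * (2 * c - u - v) / c ^ 2 = v * ((2 * c - (u + v)) / c ^ 2) := by ring
    _ ≤ v * (1 / (u + v)) :=
      mul_le_mul_of_nonneg_left (two_mul_sub_div_sq_le_one_div (by positivity) c) hv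
    _ = v / (u + v) := mul_one_div v (u + v)
    _ ≤ min 1 (v / u) :=
      le_min (div_le_one_of_le₀ (by linarith) (by positivity))
        (div_le_div_of_nonneg_left hv hu (by linarith))

lemma norm_min_one_div_le_one {u v : ℝ} (hu : 0 ≤ u) (hv : 0 ≤ v) : ‖min 1 (v / u)‖ ≤ 1 := by
  rw [Real.norm_of_nonneg (le_min zero_le_one (div_nonneg hv hu))]
  exact min_le_left 1 (v / u)

lemma integrable_mul_sub_self {Q : Measure ℝ} (hint : Integrable (fun v => v) Q)
    (hint2 : Integrable (fun v => v ^ 2) Q) (a : ℝ) :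
    Integrable (fun v => v * (a - v)) Q := by
  convert (hint.const_mul a).sub hint2 using 1
  funext v
  simp only [Pi.sub_apply]
  ring

lemma integral_mul_sub_self {Q : Measure ℝ} (hint : Integrable (fun v => v) Q)
    (hint2 : Integrable (fun v => v ^ 2) Q) (a : ℝ) :
    ∫ v, v * (a - v) ∂Q = a * ∫ v, v ∂Q - ∫ v, v ^ 2 ∂Q := by
  have h : (fun v : ℝ => v * (a - v)) = fun v => a * v - v ^ 2 := by
    funext v; ring
  rw [h, integral_sub (hint.const_mul a) hint2, integral_const_mul]

section ProbabilityMeasure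

variable {Q : Measure ℝ} [IsProbabilityMeasure Q]

lemma integrable_min_one_div_s13 (hpos : ∀ᵐ v ∂Q, 0 ≤ v) {u : ℝ} (hu : 0 ≤ u) :
    Integrable (fun v => min 1 (v / u)) Q :=
  (integrable_const (1 : ℝ)).mono'
    (measurable_const.min (measurable_id.div_const u)).aestronglyMeasurable
    (hpos.mono fun _ hv => norm_min_one_div_le_one hu hv)

lemma integral_min_one_div_le_s13 (hpos : ∀ᵐ v ∂Q, 0 ≤ v) (hint : Integrable (fun v => v) Q)
    {u : ℝ} (hu : 0 < u) :
    ∫ v, min 1 (v / u) ∂Q ≤ min 1 ((∫ v, v ∂Q) / u) := by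
  have hmin := integrable_min_one_div_s13 hpos hu.le
  refine le_min ?_ ?_
  · simpa using integral_mono hmin (integrable_const 1) fun v => min_le_left 1 (v / u)
  · rw [← integral_div]
    exact integral_mono hmin (hint.div_const u) fun v => min_le_right 1 (v / u)

lemma div_sq_le_integral_min_one_div (hpos : ∀ᵐ v ∂Q, 0 ≤ v) (hint : Integrable (fun v => v) Q)
    (hint2 : Integrable (fun v => v ^ 2) Q) {u : ℝ} (hu : 0 < u) (c : ℝ) :
    ((2 * c - u) * (∫ v, v ∂Q) - ∫ v, v ^ 2 ∂Q) / c ^ 2 ≤ ∫ v, min 1 (v / u) ∂Q := by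
  rw [← integral_mul_sub_self hint hint2, ← integral_div]
  refine integral_mono_ae ?_ (integrable_min_one_div_s13 hpos hu.le) ?_
  · exact (integrable_mul_sub_self hint hint2 _).div_const _
  · filter_upwards [hpos] with v hv
    exact mul_two_mul_sub_div_sq_le_min_one_div hu hv c

lemma integrable_mul_integral_min_one_div (hpos : ∀ᵐ v ∂Q, 0 ≤ v)
    (hint : Integrable (fun v => v) Q) :
    Integrable (fun u => u * ∫ v, min 1 (v / u) ∂Q) Q := by
  have hmeas : StronglyMeasurable fun p : ℝ × ℝ => min 1 (p.2 / p.1) :=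
    (measurable_const.min (measurable_snd.div measurable_fst)).stronglyMeasurable
  refine hint.norm.mono'
    (measurable_id.stronglyMeasurable.mul hmeas.integral_prod_right').aestronglyMeasurable ?_
  filter_upwards [hpos] with u hu
  rw [norm_mul]
  refine mul_le_of_le_one_right (norm_nonneg u) ?_
  simpa using norm_integral_le_of_norm_le_const
    (hpos.mono fun _ hv => norm_min_one_div_le_one (u := u) hu hv)

end ProbabilityMeasure

/-- Let `Q` be a probability measure on `[0,∞)` with mean `1` and finite second moment
`s̄ = ∫ u² dQ(u)`. Define `ρ_U(u) = ∫ min(1, v/u) dQ(v)`. Then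
`1/(s̄ + u) ≤ ρ_U(u) ≤ min(1, 1/u)` for all `u > 0`, and
`∫ u·ρ_U(u) dQ(u) ≥ 1/(2s̄)`. -/
theorem stmt13 (Q : Measure ℝ) [IsProbabilityMeasure Q] (hpos : ∀ᵐ v ∂Q, 0 ≤ v)
    (hint : Integrable (fun v => v) Q) (hmean : ∫ v, v ∂Q = 1)
    (hint2 : Integrable (fun v => v ^ 2) Q) (sbar : ℝ) (hs : sbar = ∫ v, v ^ 2 ∂Q) :
    (∀ u : ℝ, 0 < u →
      1 / (sbar + u) ≤ ∫ v, min 1 (v / u) ∂Q ∧ ∫ v, min 1 (v / u) ∂Q ≤ min 1 (1 / u)) ∧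
    1 / (2 * sbar) ≤ ∫ u, u * ∫ v, min 1 (v / u) ∂Q ∂Q := by
  subst hs
  set s := ∫ v, v ^ 2 ∂Q
  have hs0 : 0 ≤ s := integral_nonneg fun v => sq_nonneg v
  have hlower : ∀ {u}, 0 < u → ∀ c, (2 * c - u - s) / c ^ 2 ≤ ∫ v, min 1 (v / u) ∂Q :=
    fun hu c => by
      simpa only [hmean, mul_one] using div_sq_le_integral_min_one_div hpos hint hint2 hu c
  refine ⟨fun u hu => ⟨?_, ?_⟩, ?_⟩
  · convert hlower hu (s + u) using 1
    field_simp
    ring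
  · simpa [hmean] using integral_min_one_div_le_s13 hpos hint hu
  · have hpointwise : ∀ᵐ u ∂Q, u * (2 * (2 * s) - s - u) / (2 * s) ^ 2
        ≤ u * ∫ v, min 1 (v / u) ∂Q := by
      filter_upwards [hpos] with u hu
      rcases hu.eq_or_lt with rfl | hu
      · simp
      · rw [mul_div_assoc, sub_right_comm]
        exact mul_le_mul_of_nonneg_left (hlower hu _) hu.le
    calc 1 / (2 * s) = (2 * (2 * s) - s - s) / (2 * s) ^ 2 := by
          rcases hs0.eq_or_lt with h | h
          · simp [← h]
          · field_simp; ring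
      _ = ∫ u, u * (2 * (2 * s) - s - u) / (2 * s) ^ 2 ∂Q := by
          rw [integral_div, integral_mul_sub_self hint hint2, hmean, mul_one]
      _ ≤ _ := integral_mono_ae ((integrable_mul_sub_self hint hint2 _).div_const _)
          (integrable_mul_integral_min_one_div hpos hint) hpointwise
end

section
/- Let X be the ergodic π-reversible IMH chain with stationary initial distribution, and suppose f ∈ L¹₀(E, π) \ L²₀(E, π). Then the asymptotic variance var(f, P) = lim_n n·var(n⁻¹ Σ_{i=1}^n f(X_i)) is infinite; specifically, for each n, var(n⁻¹ Σ_{i=1}^n f(X_i)) ≥ n⁻² μ(C)^{n−1} π(1_C · f²) = ∞, where C is either {f ≥ 0} or {f ≤ 0} chosen so that π(1_C · f²) = ∞. -/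
open MeasureTheory ProbabilityTheory ENNReal

/-- The finite-dimensional laws of a Markov chain with initial distribution `π` and
transition kernel `P` (given as a measure-valued map): `chainLaw π P n` is the law of
`(X_1, …, X_{n+1})`. -/
noncomputable def chainLaw {E : Type*} [MeasurableSpace E] (π : Measure E)
    (P : E → Measure E) : (n : ℕ) → Measure (Fin (n + 1) → E)
  | 0 => π.map (fun x => fun _ => x)
  | (n + 1) => (chainLaw π P n).bind
      (fun v => (P (v (Fin.last n))).map (fun y => Fin.snoc v y))

/-! If `π(f²) = ∞`, then `π(1_C f²) = ∞` for `C = {f ≥ 0}` or `C = {f ≤ 0}`, and `μ(C) > 0`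
because `π ≪ μ`. As the acceptance probability `a = min(1, w(·)/w(x))` is at most `1`, from
every `x ∈ C` the IMH kernel gives `P(x, C) = ∫_C a dμ + (1 - ∫ a dμ) ≥ 1 - μ(Cᶜ) = μ(C)`, so
the stationary chain started in `C` stays in `C` for `n - 1` steps with weight at least
`μ(C)^{n-1}`. On that event all summands `f(X_i)` have the same sign, so
`(Σ f(X_i))² ≥ f(X_1)²`, and therefore `E[(Σ f(X_i))²] ≥ μ(C)^{n-1} π(1_C f²) = ∞`. -/

theorem Finset.sq_le_sq_sum_of_nonneg_or_nonpos {ι : Type*} {s : Finset ι} {g : ι → ℝ} {i : ι}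
    (hi : i ∈ s) (hg : (∀ j ∈ s, 0 ≤ g j) ∨ (∀ j ∈ s, g j ≤ 0)) :
    g i ^ 2 ≤ (∑ j ∈ s, g j) ^ 2 := by
  rcases hg with hg | hg
  · exact pow_le_pow_left₀ (hg i hi) (single_le_sum hg hi) 2
  · have hneg : ∀ j ∈ s, 0 ≤ -g j := fun j hj => neg_nonneg.2 (hg j hj)
    simpa [neg_sq, sum_neg_distrib] using
      pow_le_pow_left₀ (hneg i hi) (single_le_sum hneg hi) 2

theorem Fin.snoc_mem_univ_pi_iff {α : Type*} {n : ℕ} {C : Set α} {v : Fin n → α} {y : α} :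
    (Fin.snoc v y : Fin (n + 1) → α) ∈ Set.univ.pi (fun _ => C) ↔
      v ∈ Set.univ.pi (fun _ => C) ∧ y ∈ C := by
  simp [Fin.forall_fin_succ']

theorem evariance_eq_top_of_lintegral_sq_eq_top {Ω : Type*} [MeasurableSpace Ω] {P : Measure Ω}
    [IsFiniteMeasure P] {Y : Ω → ℝ} (hY : AEStronglyMeasurable Y P)
    (h : ∫⁻ ω, ENNReal.ofReal (Y ω ^ 2) ∂P = ⊤) : evariance Y P = ⊤ :=
  evariance_eq_top hY fun hL2 => hL2.integrable_sq.lintegral_lt_top.ne h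

section Measure

variable {E : Type*} [MeasurableSpace E]

theorem setLIntegral_nonneg_eq_top_or_setLIntegral_nonpos_eq_top {π : Measure E} {f : E → ℝ}
    {g : E → ℝ≥0∞} (h : ∫⁻ x, g x ∂π = ⊤) :
    ∫⁻ x in {x | 0 ≤ f x}, g x ∂π = ⊤ ∨ ∫⁻ x in {x | f x ≤ 0}, g x ∂π = ⊤ := by
  rw [← ENNReal.add_eq_top, ← top_le_iff, ← h]
  have hcover : {x | 0 ≤ f x} ∪ {x | f x ≤ 0} = Set.univ :=
    Set.eq_univ_of_forall fun x => le_total 0 (f x)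
  calc ∫⁻ x, g x ∂π = ∫⁻ x in {x | 0 ≤ f x} ∪ {x | f x ≤ 0}, g x ∂π := by
        rw [hcover, setLIntegral_univ]
    _ ≤ _ := lintegral_union_le _ _ _

theorem measure_le_withDensity_add_smul_dirac_apply {μ : Measure E} [IsProbabilityMeasure μ]
    {a : E → ℝ≥0∞} (ha : ∀ y, a y ≤ 1) {r : ℝ≥0∞} (hr : 1 - ∫⁻ y, a y ∂μ ≤ r) {C : Set E}
    (hC : MeasurableSet C) {x : E} (hx : x ∈ C) :
    μ C ≤ (μ.withDensity a + r • Measure.dirac x) C := by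
  have hle : ∀ s, ∫⁻ y in s, a y ∂μ ≤ μ s := fun s => (lintegral_mono ha).trans_eq (by simp)
  set A := ∫⁻ y in C, a y ∂μ
  set B := ∫⁻ y in Cᶜ, a y ∂μ
  have hsplit : ∫⁻ y, a y ∂μ = A + B := (lintegral_add_compl a hC).symm
  have hA : A ≤ 1 - B := by
    refine ENNReal.le_sub_of_add_le_right ((hle _).trans_lt (measure_lt_top μ _)).ne ?_
    simpa [← hsplit] using hle Set.univ
  calc μ C = 1 - μ Cᶜ := by
        rw [prob_compl_eq_one_sub hC, ENNReal.sub_sub_cancel one_ne_top prob_le_one]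
    _ ≤ 1 - B := tsub_le_tsub_left (hle _) 1
    _ = A + (1 - (A + B)) := by rw [add_comm A B, ← tsub_tsub, add_tsub_cancel_of_le hA]
    _ ≤ A + r := add_le_add_right (hsplit ▸ hr) A
    _ = (μ.withDensity a + r • Measure.dirac x) C := by
      simp [withDensity_apply _ hC, hx, A]

end Measure

section IMH

variable {E : Type*} [MeasurableSpace E]

noncomputable def imhRejection (μ : Measure E) (w : E → ℝ) (x : E) : ℝ≥0∞ :=
  1 - ENNReal.ofReal (∫ y, min 1 (w y / w x) ∂μ)

/-- The IMH transition as a kernel; the kernel API is what makes the transition step of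
`chainLaw` measurable. -/
noncomputable def imhKernel (μ : Measure E) [SFinite μ] (w : E → ℝ) : Kernel E E :=
  (Kernel.const E μ).withDensity (fun x y => ENNReal.ofReal (min 1 (w y / w x)))
    + (Kernel.deterministic id measurable_id).withDensity (fun x _ => imhRejection μ w x)

instance (μ : Measure E) [SFinite μ] (w : E → ℝ) : IsSFiniteKernel (imhKernel μ w) :=
  have := Kernel.IsSFiniteKernel.withDensity (Kernel.const E μ)
    (f := fun x y => ENNReal.ofReal (min 1 (w y / w x))) fun _ _ => ofReal_ne_top
  have := Kernel.IsSFiniteKernel.withDensity (Kernel.deterministic id measurable_id)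
    (f := fun x (_ : E) => imhRejection μ w x) fun _ _ => sub_ne_top one_ne_top
  inferInstanceAs (IsSFiniteKernel (_ + _))

variable {w : E → ℝ}

theorem measurable_uncurry_acceptance (hw : Measurable w) :
    Measurable (Function.uncurry fun x y => min (1 : ℝ) (w y / w x)) :=
  measurable_const.min ((hw.comp measurable_snd).div (hw.comp measurable_fst))

theorem measurable_imhRejection {μ : Measure E} [SFinite μ] (hw : Measurable w) :
    Measurable (imhRejection μ w) :=
  ((measurable_uncurry_acceptance hw).stronglyMeasurable.integral_prod_right).measurable
    |>.ennreal_ofReal.const_sub 1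

theorem imhKernel_apply {μ : Measure E} [SFinite μ] (hw : Measurable w) (x : E) :
    imhKernel μ w x = μ.withDensity (fun y => ENNReal.ofReal (min 1 (w y / w x)))
      + imhRejection μ w x • Measure.dirac x := by
  rw [imhKernel, add_apply,
    Kernel.withDensity_apply _ (measurable_uncurry_acceptance hw).ennreal_ofReal,
    Kernel.withDensity_apply (f := fun x (_ : E) => imhRejection μ w x) _
      ((measurable_imhRejection hw).comp measurable_fst),
    Kernel.const_apply, Kernel.deterministic_apply, id, withDensity_const]

theorem measure_le_imhKernel_apply {μ : Measure E} [IsProbabilityMeasure μ] (hwm : Measurable w)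
    (hw : ∀ x, 0 < w x) {C : Set E} (hC : MeasurableSet C) {x : E} (hx : x ∈ C) :
    μ C ≤ imhKernel μ w x C := by
  have hacc_nonneg (y : E) : 0 ≤ min 1 (w y / w x) :=
    le_min zero_le_one (div_pos (hw y) (hw x)).le
  have hacc_int : Integrable (fun y => min 1 (w y / w x)) μ :=
    Integrable.of_bound (by fun_prop) 1 (Filter.Eventually.of_forall fun y => by
      rw [Real.norm_of_nonneg (hacc_nonneg y)]; exact min_le_left _ _)
  rw [imhKernel_apply hwm]
  refine measure_le_withDensity_add_smul_dirac_apply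
    (fun y => ENNReal.ofReal_le_one.2 (min_le_left _ _)) (le_of_eq ?_) hC hx
  rw [imhRejection, ofReal_integral_eq_lintegral_ofReal hacc_int
    (Filter.Eventually.of_forall hacc_nonneg)]

end IMH

section Chain

variable {E : Type*} [MeasurableSpace E]

theorem measurable_snoc (n : ℕ) :
    Measurable fun p : (Fin n → E) × E => (Fin.snoc p.1 p.2 : Fin (n + 1) → E) := by
  refine measurable_pi_lambda _ fun i => ?_
  induction i using Fin.lastCases with
  | last => simpa using measurable_snd
  | cast j =>
    simp only [Fin.snoc_castSucc]
    exact (measurable_pi_apply j).comp measurable_fst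

theorem measurable_snoc_right {n : ℕ} (v : Fin n → E) :
    Measurable fun y => (Fin.snoc v y : Fin (n + 1) → E) :=
  (measurable_snoc n).comp measurable_prodMk_left

theorem measurable_map_snoc (κ : Kernel E E) [IsSFiniteKernel κ] (m : ℕ) :
    Measurable fun v : Fin (m + 1) → E =>
      (κ (v (Fin.last m))).map (fun y => (Fin.snoc v y : Fin (m + 2) → E)) := by
  refine Measure.measurable_of_measurable_coe _ fun s hs => ?_
  simp only [Measure.map_apply (measurable_snoc_right _) hs]
  exact Kernel.measurable_kernel_prodMk_left
    (κ := κ.comap (· (Fin.last m)) (measurable_pi_apply _)) (measurable_snoc (m + 1) hs)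

variable {κ : Kernel E E} {C : Set E} {c : ℝ≥0∞}

theorem indicator_le_setLIntegral_map_snoc (hC : MeasurableSet C) (hκC : ∀ x ∈ C, c ≤ κ x C)
    {g : E → ℝ≥0∞} (hg : Measurable g) {m : ℕ} (v : Fin (m + 1) → E) :
    (Set.univ.pi fun _ => C).indicator (fun v => c * g (v 0)) v ≤
      ∫⁻ u in Set.univ.pi (fun _ => C), g (u 0)
        ∂(κ (v (Fin.last m))).map (fun y => (Fin.snoc v y : Fin (m + 2) → E)) := by
  by_cases hv : v ∈ Set.univ.pi fun _ => C
  · have hpre : (fun y => (Fin.snoc v y : Fin (m + 2) → E)) ⁻¹' Set.univ.pi (fun _ => C) = C := by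
      ext y; simp only [Set.mem_preimage, Fin.snoc_mem_univ_pi_iff, hv, true_and]
    rw [Set.indicator_of_mem hv, setLIntegral_map (f := fun u => g (u 0))
      (MeasurableSet.univ_pi fun _ => hC) (by fun_prop) (measurable_snoc_right v), hpre]
    simp only [Fin.snoc_apply_zero, setLIntegral_const, mul_comm c]
    gcongr
    exact hκC _ (hv (Fin.last m) trivial)
  · simp [hv]

theorem pow_mul_setLIntegral_le_setLIntegral_chainLaw [IsSFiniteKernel κ] (π : Measure E)
    (hC : MeasurableSet C) (hκC : ∀ x ∈ C, c ≤ κ x C) {g : E → ℝ≥0∞} (hg : Measurable g)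
    (m : ℕ) :
    c ^ m * ∫⁻ x in C, g x ∂π ≤ ∫⁻ v in Set.univ.pi (fun _ => C), g (v 0) ∂chainLaw π κ m := by
  have hpiC (n : ℕ) : MeasurableSet (Set.univ.pi fun _ : Fin (n + 1) => C) :=
    MeasurableSet.univ_pi fun _ => hC
  induction m with
  | zero =>
    have hpre : (fun x : E => fun _ : Fin 1 => x) ⁻¹' Set.univ.pi (fun _ => C) = C := by
      ext x; simp
    rw [chainLaw, setLIntegral_map (hpiC 0) (by fun_prop) (by fun_prop), hpre, pow_zero, one_mul]
  | succ m ih =>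
    calc c ^ (m + 1) * ∫⁻ x in C, g x ∂π
        ≤ c * ∫⁻ v in Set.univ.pi (fun _ => C), g (v 0) ∂chainLaw π κ m := by
          rw [pow_succ', mul_assoc]; gcongr
      _ = ∫⁻ v, (Set.univ.pi fun _ => C).indicator (fun v => c * g (v 0)) v ∂chainLaw π κ m := by
          rw [lintegral_indicator (hpiC m), lintegral_const_mul _ (by fun_prop)]
      _ ≤ ∫⁻ v, ∫⁻ u in Set.univ.pi (fun _ => C), g (u 0)
            ∂(κ (v (Fin.last m))).map (fun y => (Fin.snoc v y : Fin (m + 2) → E))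
            ∂chainLaw π κ m :=
          lintegral_mono fun v => indicator_le_setLIntegral_map_snoc hC hκC hg v
      _ = ∫⁻ v in Set.univ.pi (fun _ => C), g (v 0) ∂chainLaw π κ (m + 1) := by
          rw [chainLaw, ← lintegral_indicator (hpiC (m + 1)), Measure.lintegral_bind
            (measurable_map_snoc κ m).aemeasurable
            ((Measurable.indicator (by fun_prop) (hpiC (m + 1))).aemeasurable)]
          simp only [lintegral_indicator (hpiC (m + 1))]

theorem lintegral_sq_sum_chainLaw_eq_top [IsSFiniteKernel κ] (π : Measure E)
    (hC : MeasurableSet C) (hκC : ∀ x ∈ C, c ≤ κ x C) (hc : c ≠ 0) {f : E → ℝ}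
    (hf : Measurable f) (hfC : (∀ x ∈ C, 0 ≤ f x) ∨ (∀ x ∈ C, f x ≤ 0))
    (hCf : ∫⁻ x in C, ENNReal.ofReal (f x ^ 2) ∂π = ⊤) (m : ℕ) :
    ∫⁻ v, ENNReal.ofReal ((∑ i, f (v i)) ^ 2) ∂chainLaw π κ m = ⊤ := by
  refine top_le_iff.1 ?_
  calc ⊤ = c ^ m * ∫⁻ x in C, ENNReal.ofReal (f x ^ 2) ∂π := by
        rw [hCf, mul_top (pow_ne_zero m hc)]
    _ ≤ ∫⁻ v in Set.univ.pi (fun _ => C), ENNReal.ofReal (f (v 0) ^ 2) ∂chainLaw π κ m :=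
        pow_mul_setLIntegral_le_setLIntegral_chainLaw π hC hκC (by fun_prop) m
    _ ≤ ∫⁻ v in Set.univ.pi (fun _ => C), ENNReal.ofReal ((∑ i, f (v i)) ^ 2) ∂chainLaw π κ m :=
        setLIntegral_mono' (MeasurableSet.univ_pi fun _ => hC) fun v hv =>
          ENNReal.ofReal_le_ofReal <| Finset.sq_le_sq_sum_of_nonneg_or_nonpos (Finset.mem_univ 0)
            (hfC.imp (fun h j _ => h _ (hv j trivial)) (fun h j _ => h _ (hv j trivial)))
    _ ≤ _ := setLIntegral_le_lintegral _ _

theorem evariance_const_mul_sum_range_eq_top {Ω : Type*} [MeasurableSpace Ω] {Pr : Measure Ω}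
    [IsFiniteMeasure Pr] {c : ℝ} (hc : c ≠ 0) {f : E → ℝ} (hf : Measurable f) {X : ℕ → Ω → E}
    (hX : ∀ n, Measurable (X n)) {m : ℕ} {ν : Measure (Fin (m + 1) → E)}
    (hXν : Measure.map (fun ω => fun i : Fin (m + 1) => X i ω) Pr = ν)
    (hν : ∫⁻ v, ENNReal.ofReal ((∑ i, f (v i)) ^ 2) ∂ν = ⊤) :
    evariance (fun ω => c * ∑ i ∈ Finset.range (m + 1), f (X i ω)) Pr = ⊤ := by
  have hsum : Measurable fun v : Fin (m + 1) → E => ∑ i, f (v i) :=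
    Finset.measurable_sum _ fun i _ => hf.comp (measurable_pi_apply i)
  have hS : ∫⁻ ω, ENNReal.ofReal ((∑ i ∈ Finset.range (m + 1), f (X i ω)) ^ 2) ∂Pr = ⊤ := by
    simp_rw [← Fin.sum_univ_eq_sum_range fun i => f (X i _)]
    rwa [← lintegral_map (hsum.pow_const 2).ennreal_ofReal (measurable_pi_lambda _ fun i => hX i),
      hXν]
  have hSm : Measurable fun ω => ∑ i ∈ Finset.range (m + 1), f (X i ω) :=
    Finset.measurable_sum _ fun i _ => hf.comp (hX i)
  rw [evariance_mul, evariance_eq_top_of_lintegral_sq_eq_top hSm.aestronglyMeasurable hS,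
    mul_top (ENNReal.ofReal_pos.2 (by positivity)).ne']

end Chain

theorem stmt17_general {E Ω : Type*} [MeasurableSpace E] [MeasurableSpace Ω]
    (Pr : Measure Ω) [IsProbabilityMeasure Pr]
    (μ π : Measure E) [IsProbabilityMeasure μ]
    (w : E → ℝ) (hwm : Measurable w) (hw : ∀ x, 0 < w x)
    (hdens : π = μ.withDensity (fun x => ENNReal.ofReal (w x)))
    (f : E → ℝ) (hfm : Measurable f)
    (hf2 : ∫⁻ x, ENNReal.ofReal (f x ^ 2) ∂π = ⊤)
    (P : E → Measure E)
    (hP : ∀ x, P x = μ.withDensity (fun y => ENNReal.ofReal (min 1 (w y / w x)))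
        + (1 - ENNReal.ofReal (∫ y, min 1 (w y / w x) ∂μ)) • Measure.dirac x)
    (X : ℕ → Ω → E) (hXm : ∀ n, Measurable (X n))
    (hchain : ∀ n : ℕ,
      Measure.map (fun ω => fun i : Fin (n + 1) => X i ω) Pr = chainLaw π P n) :
    ∃ C : Set E, (C = {x | 0 ≤ f x} ∨ C = {x | f x ≤ 0}) ∧
      (∫⁻ x in C, ENNReal.ofReal (f x ^ 2) ∂π = ⊤) ∧
      ∀ n : ℕ, 1 ≤ n →
        ENNReal.ofReal (((n : ℝ)⁻¹) ^ 2) * (μ C) ^ (n - 1) *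
            ∫⁻ x in C, ENNReal.ofReal (f x ^ 2) ∂π
          ≤ evariance (fun ω => (n : ℝ)⁻¹ * ∑ i ∈ Finset.range n, f (X i ω)) Pr ∧
        evariance (fun ω => (n : ℝ)⁻¹ * ∑ i ∈ Finset.range n, f (X i ω)) Pr = ⊤ := by
  obtain ⟨C, hCdef, hCf⟩ : ∃ C : Set E, (C = {x | 0 ≤ f x} ∨ C = {x | f x ≤ 0}) ∧
      ∫⁻ x in C, ENNReal.ofReal (f x ^ 2) ∂π = ⊤ :=
    (setLIntegral_nonneg_eq_top_or_setLIntegral_nonpos_eq_top hf2).elim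
      (fun h => ⟨_, .inl rfl, h⟩) (fun h => ⟨_, .inr rfl, h⟩)
  have hC : MeasurableSet C := by
    rcases hCdef with rfl | rfl
    exacts [measurableSet_le measurable_const hfm, measurableSet_le hfm measurable_const]
  have hfC : (∀ x ∈ C, 0 ≤ f x) ∨ (∀ x ∈ C, f x ≤ 0) := by
    rcases hCdef with rfl | rfl
    exacts [.inl fun _ => id, .inr fun _ => id]
  have hμC : μ C ≠ 0 := fun h => by
    have hπC : π C = 0 := hdens ▸ withDensity_absolutelyContinuous μ _ h
    simp [Measure.restrict_eq_zero.2 hπC] at hCf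
  obtain rfl : P = imhKernel μ w := funext fun x => (hP x).trans (imhKernel_apply hwm x).symm
  refine ⟨C, hCdef, hCf, fun n hn => ?_⟩
  obtain ⟨m, rfl⟩ := Nat.exists_eq_add_of_le' hn
  have hvar := evariance_const_mul_sum_range_eq_top (c := ((m + 1 : ℕ) : ℝ)⁻¹) (by positivity)
    hfm hXm (hchain m) (lintegral_sq_sum_chainLaw_eq_top π hC
      (fun x => measure_le_imhKernel_apply hwm hw hC) hμC hfm hfC hCf m)
  exact ⟨hvar ▸ le_top, hvar⟩

/-- Let `(X_n)` be the stationary independent Metropolis–Hastings chain with target `π`,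
proposal `μ` and `w = dπ/dμ`, and let `f ∈ L¹₀(E, π) \ L²₀(E, π)`. Then there is a set `C`,
either `{f ≥ 0}` or `{f ≤ 0}`, with `π(1_C·f²) = ∞`, such that for each `n ≥ 1` the
variance of the ergodic average satisfies
`var(n⁻¹ Σ_{i=1}^n f(X_i)) ≥ n⁻² μ(C)^{n−1} π(1_C·f²) = ∞`; in particular all these
variances (and hence the asymptotic variance) are infinite. -/
theorem stmt17 {E Ω : Type*} [MeasurableSpace E] [MeasurableSpace Ω]
    (Pr : Measure Ω) [IsProbabilityMeasure Pr]
    (μ π : Measure E) [IsProbabilityMeasure μ] [IsProbabilityMeasure π]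
    (w : E → ℝ) (hwm : Measurable w) (hw : ∀ x, 0 < w x)
    (hdens : π = μ.withDensity (fun x => ENNReal.ofReal (w x)))
    (f : E → ℝ) (hfm : Measurable f) (hfint : Integrable f π) (hf0 : ∫ x, f x ∂π = 0)
    (hf2 : ∫⁻ x, ENNReal.ofReal (f x ^ 2) ∂π = ⊤)
    (P : E → Measure E)
    (hP : ∀ x, P x = μ.withDensity (fun y => ENNReal.ofReal (min 1 (w y / w x)))
        + (1 - ENNReal.ofReal (∫ y, min 1 (w y / w x) ∂μ)) • Measure.dirac x)
    (X : ℕ → Ω → E) (hXm : ∀ n, Measurable (X n))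
    (hchain : ∀ n : ℕ,
      Measure.map (fun ω => fun i : Fin (n + 1) => X i ω) Pr = chainLaw π P n) :
    ∃ C : Set E, (C = {x | 0 ≤ f x} ∨ C = {x | f x ≤ 0}) ∧
      (∫⁻ x in C, ENNReal.ofReal (f x ^ 2) ∂π = ⊤) ∧
      ∀ n : ℕ, 1 ≤ n →
        ENNReal.ofReal (((n : ℝ)⁻¹) ^ 2) * (μ C) ^ (n - 1) *
            ∫⁻ x in C, ENNReal.ofReal (f x ^ 2) ∂π
          ≤ evariance (fun ω => (n : ℝ)⁻¹ * ∑ i ∈ Finset.range n, f (X i ω)) Pr ∧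
        evariance (fun ω => (n : ℝ)⁻¹ * ∑ i ∈ Finset.range n, f (X i ω)) Pr = ⊤ :=
  stmt17_general Pr μ π w hwm hw hdens f hfm hf2 P hP X hXm hchain
end
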